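/- Completeness of violation classes (Lemma 2, violation part): Let φ be an STL formula with a classification criterion fixed as in the context. For every signal w with w ⊭ φ, there exists a violation class ψ ∈ Cls⁻(φ) such that w ∈ V(ψ), i.e. there exists a valuation θ ∈ Θ with w ⊭ ψ(θ). -/

import Mathlib

namespace STLClass

abbrev Signal (N : ℕ) := ℝ → Fin N → ℝ

def shift {N : ℕ} (w : Signal N) (t : ℝ) : Signal N := fun t' => w (t + t')

inductive STL (N : ℕ) : Type where
  | atom (f : (Fin N → ℝ) → ℝ)
  | falsum
  | not (φ : STL N)
  | and (φ₁ φ₂ : STL N)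
  | or (φ₁ φ₂ : STL N)
  | always (a b : ℝ) (φ : STL N)
  | event (a b : ℝ) (φ : STL N)
  | untl (a b : ℝ) (φ₁ φ₂ : STL N)

def STL.top {N : ℕ} : STL N := .not .falsum

noncomputable def robust {N : ℕ} : STL N → Signal N → EReal
  | .atom f, w => ((f (w 0) : ℝ) : EReal)
  | .falsum, _ => ⊥
  | .not φ, w => - robust φ w
  | .and φ₁ φ₂, w => min (robust φ₁ w) (robust φ₂ w)
  | .or φ₁ φ₂, w => max (robust φ₁ w) (robust φ₂ w)
  | .always a b φ, w => ⨅ t : Set.Icc a b, robust φ (shift w t.1)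
  | .event a b φ, w => ⨆ t : Set.Icc a b, robust φ (shift w t.1)
  | .untl a b φ₁ φ₂, w =>
      ⨆ t : Set.Icc a b,
        min (robust φ₂ (shift w t.1)) (⨅ t' : Set.Ico (0 : ℝ) t.1, robust φ₁ (shift w t'.1))

def Sat {N : ℕ} (w : Signal N) (φ : STL N) : Prop := 0 < robust φ w

def Vio {N : ℕ} (w : Signal N) (φ : STL N) : Prop := robust φ w < 0

/-- An STL formula together with a classification criterion: each temporal operator is
annotated with a natural number `k`, meaning that its interval is split into `k + 1`
consecutive segments (so the "positive integer" of the criterion is `k + 1`). -/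
inductive AForm (N : ℕ) : Type where
  | atom (f : (Fin N → ℝ) → ℝ)
  | falsum
  | not (φ : AForm N)
  | and (φ₁ φ₂ : AForm N)
  | or (φ₁ φ₂ : AForm N)
  | always (a b : ℝ) (k : ℕ) (φ : AForm N)
  | event (a b : ℝ) (k : ℕ) (φ : AForm N)
  | untl (a b : ℝ) (k : ℕ) (φ₁ φ₂ : AForm N)

/-- The underlying STL formula of an annotated formula. -/
def AForm.toSTL {N : ℕ} : AForm N → STL N
  | .atom f => .atom f
  | .falsum => .falsum
  | .not φ => .not φ.toSTL
  | .and φ₁ φ₂ => .and φ₁.toSTL φ₂.toSTL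
  | .or φ₁ φ₂ => .or φ₁.toSTL φ₂.toSTL
  | .always a b _ φ => .always a b φ.toSTL
  | .event a b _ φ => .event a b φ.toSTL
  | .untl a b _ φ₁ φ₂ => .untl a b φ₁.toSTL φ₂.toSTL

/-- Well-formedness: every temporal interval `[a, b]` satisfies `0 ≤ a < b`. -/
def AForm.WF {N : ℕ} : AForm N → Prop
  | .atom _ => True
  | .falsum => True
  | .not φ => φ.WF
  | .and φ₁ φ₂ => φ₁.WF ∧ φ₂.WF
  | .or φ₁ φ₂ => φ₁.WF ∧ φ₂.WF
  | .always a b _ φ => 0 ≤ a ∧ a < b ∧ φ.WF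
  | .event a b _ φ => 0 ≤ a ∧ a < b ∧ φ.WF
  | .untl a b _ φ₁ φ₂ => 0 ≤ a ∧ a < b ∧ φ₁.WF ∧ φ₂.WF

/-- A split of the interval `[a, b]` into `n` consecutive nonsingular segments:
`n + 1` strictly increasing points starting at `a` and ending at `b`.  The segment
`i` is `[pts i.castSucc, pts i.succ]`. -/
structure Split (a b : ℝ) (n : ℕ) : Type where
  pts : Fin (n + 1) → ℝ
  strictMono : StrictMono pts
  first : pts 0 = a
  last : pts (Fin.last n) = b

/-- The valuation space `Θ` of an annotated formula: a choice of admissible breakpoints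
for each temporal subformula. -/
def Val {N : ℕ} : AForm N → Type
  | .atom _ => PUnit
  | .falsum => PUnit
  | .not φ => Val φ
  | .and φ₁ φ₂ => Val φ₁ × Val φ₂
  | .or φ₁ φ₂ => Val φ₁ × Val φ₂
  | .always a b k φ => Split a b (k + 1) × Val φ
  | .event a b k φ => Split a b (k + 1) × Val φ
  | .untl a b k φ₁ φ₂ => Split a b (k + 1) × Val φ₁ × Val φ₂

/-- Finite conjunction of a list of STL formulas (empty conjunction is `⊤`). -/
def listAnd {N : ℕ} : List (STL N) → STL N
  | [] => STL.top
  | [φ] => φ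
  | φ :: φ' :: rest => .and φ (listAnd (φ' :: rest))

/-- Finite disjunction of a list of STL formulas (empty disjunction is `⊥`). -/
def listOr {N : ℕ} : List (STL N) → STL N
  | [] => .falsum
  | [φ] => φ
  | φ :: φ' :: rest => .or φ (listOr (φ' :: rest))

/-- `⋀_{i} f i`. -/
def iAnd {N : ℕ} {k : ℕ} (f : Fin k → STL N) : STL N := listAnd (List.ofFn f)

/-- `⋁_{i} f i`. -/
def iOr {N : ℕ} {k : ℕ} (f : Fin k → STL N) : STL N := listOr (List.ofFn f)

/-- `Cls true φ` is the set `Cls⁺(φ)` of satisfaction classes and `Cls false φ` is the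
set `Cls⁻(φ)` of violation classes; a class is represented by its instantiation map
`Θ → STL N` sending a valuation `θ` to the STL formula `ψ(θ)`. -/
def Cls {N : ℕ} : Bool → (φ : AForm N) → Set (Val φ → STL N)
  | b, .atom f =>
      {fun _ => if b then STL.falsum else STL.top, fun _ => STL.atom f}
  | _, .falsum => {fun _ => STL.falsum}
  | b, .not φ =>
      {c | ∃ ψ ∈ Cls (!b) φ, c = fun θ => STL.not (ψ θ)}
  | b, .and φ₁ φ₂ =>
      {c | ∃ ψ₁ ∈ Cls b φ₁, ∃ ψ₂ ∈ Cls b φ₂,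
        c = fun θ => STL.and (ψ₁ θ.1) (ψ₂ θ.2)}
  | b, .or φ₁ φ₂ =>
      {c | ∃ ψ₁ ∈ Cls b φ₁, ∃ ψ₂ ∈ Cls b φ₂,
        c = fun θ => STL.or (ψ₁ θ.1) (ψ₂ θ.2)}
  | b, .always _ _ k φ =>
      {c | ∃ ψ : Fin (k + 1) → Val φ → STL N, (∀ i, ψ i ∈ Cls b φ) ∧
        c = fun θ => iAnd fun i : Fin (k + 1) =>
          STL.always (θ.1.pts i.castSucc) (θ.1.pts i.succ) (ψ i θ.2)}
  | b, .event _ _ k φ =>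
      {c | ∃ ψ : Fin (k + 1) → Val φ → STL N, (∀ i, ψ i ∈ Cls b φ) ∧
        c = fun θ => iOr fun i : Fin (k + 1) =>
          STL.event (θ.1.pts i.castSucc) (θ.1.pts i.succ) (ψ i θ.2)}
  | b, .untl _ _ k φ₁ φ₂ =>
      {c | ∃ ψ : Fin (k + 1) → Val φ₁ → STL N, ∃ σ : Fin (k + 1) → Val φ₂ → STL N,
           ∃ ξ : Fin (k + 1) → Fin (k + 1) → Val φ₁ → STL N,
        (∀ i, ψ i ∈ Cls b φ₁) ∧ (∀ i, σ i ∈ Cls b φ₂) ∧ (∀ i j, ξ i j ∈ Cls b φ₁) ∧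
        c = fun θ => iOr fun i : Fin (k + 1) =>
          STL.and
            (STL.untl (θ.1.pts i.castSucc) (θ.1.pts i.succ) (ψ i θ.2.1) (σ i θ.2.2))
            (iAnd fun j : Fin (i : ℕ) =>
              STL.always (θ.1.pts (j.castLE i.isLt.le).castSucc)
                (θ.1.pts (j.castLE i.isLt.le).succ) (ξ i (j.castLE i.isLt.le) θ.2.1))}

/-- The satisfiable set `S(ψ)` of a class. -/
def SatSet {N : ℕ} (φ : AForm N) (ψ : Val φ → STL N) : Set (Signal N) :=
  {w | ∃ θ : Val φ, Sat w (ψ θ)}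

/-- The falsifiable set `V(ψ)` of a class. -/
def VioSet {N : ℕ} (φ : AForm N) (ψ : Val φ → STL N) : Set (Signal N) :=
  {w | ∃ θ : Val φ, Vio w (ψ θ)}


/-! The class mirroring `φ` itself, with every interval cut into equal pieces, has the same
robustness as `φ` at every signal: cutting `[a, b]` into segments only regroups the infimum or
supremum over `[a, b]`. For `φ₁ U φ₂` one regroups at the first segment containing the witness
time `t`; the segments before it lie in `[0, t)`, which is where the guards `□ ξ_j` live. -/

section Robust

variable {N : ℕ}

lemma robust_top (w : Signal N) : robust STL.top w = ⊤ := by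
  simp [STL.top, robust]

lemma robust_listAnd (l : List (STL N)) (w : Signal N) :
    robust (listAnd l) w = ⨅ φ ∈ l, robust φ w := by
  induction l with
  | nil => simp [listAnd, robust_top]
  | cons φ l ih =>
    cases l with
    | nil => simp [listAnd]
    | cons φ' l => simp [listAnd, robust, ih, iInf_or, iInf_inf_eq]

lemma robust_listOr (l : List (STL N)) (w : Signal N) :
    robust (listOr l) w = ⨆ φ ∈ l, robust φ w := by
  induction l with
  | nil => simp [listOr, robust]
  | cons φ l ih =>
    cases l with
    | nil => simp [listOr]
    | cons φ' l => simp [listOr, robust, ih, iSup_or, iSup_sup_eq]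

lemma robust_iAnd {k : ℕ} (f : Fin k → STL N) (w : Signal N) :
    robust (iAnd f) w = ⨅ i, robust (f i) w := by
  simp only [iAnd, robust_listAnd, List.mem_ofFn']
  exact iInf_range

lemma robust_iOr {k : ℕ} (f : Fin k → STL N) (w : Signal N) :
    robust (iOr f) w = ⨆ i, robust (f i) w := by
  simp only [iOr, robust_listOr, List.mem_ofFn']
  exact iSup_range

end Robust

namespace Split

noncomputable def uniform {a b : ℝ} (h : a < b) (n : ℕ) : Split a b (n + 1) where
  pts i := a + i * ((b - a) / (n + 1))
  strictMono i j hij := by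
    have hstep : 0 < (b - a) / (n + 1) := div_pos (sub_pos.2 h) n.cast_add_one_pos
    have hij' : (i : ℝ) < j := by exact_mod_cast hij
    simpa using mul_lt_mul_of_pos_right hij' hstep
  first := by simp
  last := by
    simp only [Fin.val_last]
    push_cast
    field_simp
    ring

variable {a b : ℝ} {n : ℕ} (s : Split a b (n + 1))

lemma pts_mem_Icc (i : Fin (n + 2)) : s.pts i ∈ Set.Icc a b :=
  ⟨s.first.symm.le.trans (s.strictMono.monotone (Fin.zero_le i)),
    (s.strictMono.monotone (Fin.le_last i)).trans s.last.le⟩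

lemma segment_subset (i : Fin (n + 1)) :
    Set.Icc (s.pts i.castSucc) (s.pts i.succ) ⊆ Set.Icc a b := fun _ ht =>
  ⟨(s.pts_mem_Icc _).1.trans ht.1, ht.2.trans (s.pts_mem_Icc _).2⟩

lemma exists_first_segment_mem {t : ℝ} (ht : t ∈ Set.Icc a b) :
    ∃ i : Fin (n + 1), t ∈ Set.Icc (s.pts i.castSucc) (s.pts i.succ) ∧
      ∀ j < i, s.pts j.succ < t := by
  obtain ⟨i, hi, hmin⟩ := wellFounded_lt.has_min {i : Fin (n + 1) | t ≤ s.pts i.succ}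
    ⟨Fin.last n, by simpa [s.last] using ht.2⟩
  have hbefore : ∀ j < i, s.pts j.succ < t := fun j hj => not_le.1 fun h => hmin j h hj
  refine ⟨i, ⟨?_, hi⟩, hbefore⟩
  cases i using Fin.cases with
  | zero => simpa [s.first] using ht.1
  | succ j => simpa using (hbefore j.castSucc Fin.castSucc_lt_succ).le

variable {N : ℕ} (w : Signal N)

lemma robust_iAnd_always (φ : STL N) :
    robust (iAnd fun i => .always (s.pts i.castSucc) (s.pts i.succ) φ) w =
      robust (.always a b φ) w := by
  simp only [robust_iAnd, robust]
  apply le_antisymm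
  · refine le_iInf fun t => ?_
    obtain ⟨i, hti, -⟩ := s.exists_first_segment_mem t.2
    exact iInf_le_of_le i (iInf_le_of_le ⟨t, hti⟩ le_rfl)
  · exact le_iInf fun i => le_iInf fun t => iInf_le_of_le ⟨t, s.segment_subset i t.2⟩ le_rfl

lemma robust_iOr_event (φ : STL N) :
    robust (iOr fun i => .event (s.pts i.castSucc) (s.pts i.succ) φ) w =
      robust (.event a b φ) w := by
  simp only [robust_iOr, robust]
  apply le_antisymm
  · exact iSup_le fun i => iSup_le fun t => le_iSup_of_le ⟨t, s.segment_subset i t.2⟩ le_rfl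
  · refine iSup_le fun t => ?_
    obtain ⟨i, hti, -⟩ := s.exists_first_segment_mem t.2
    exact le_iSup_of_le i (le_iSup_of_le ⟨t, hti⟩ le_rfl)

lemma robust_iOr_untl (ha : 0 ≤ a) (φ₁ φ₂ : STL N) :
    robust (iOr fun i => .and (.untl (s.pts i.castSucc) (s.pts i.succ) φ₁ φ₂)
      (iAnd fun j : Fin i => .always (s.pts (j.castLE i.isLt.le).castSucc)
        (s.pts (j.castLE i.isLt.le).succ) φ₁)) w =
      robust (.untl a b φ₁ φ₂) w := by
  simp only [robust_iOr, robust_iAnd, robust]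
  apply le_antisymm
  · refine iSup_le fun i => (min_le_left _ _).trans (iSup_le fun t => ?_)
    exact le_iSup_of_le ⟨t, s.segment_subset i t.2⟩ le_rfl
  · refine iSup_le fun t => ?_
    obtain ⟨i, hti, hbefore⟩ := s.exists_first_segment_mem t.2
    refine le_iSup_of_le i (le_min (le_iSup_of_le ⟨t, hti⟩ le_rfl) ?_)
    refine le_iInf fun j => le_iInf fun t' =>
      (min_le_right _ _).trans (iInf_le_of_le ⟨t', ?_, ?_⟩ le_rfl)
    · exact ha.trans ((s.pts_mem_Icc _).1.trans t'.2.1)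
    · exact t'.2.2.trans_lt (hbefore _ (Fin.lt_def.2 j.isLt))

end Split

theorem exists_mem_cls_robust_eq {N : ℕ} (pol : Bool) (φ : AForm N) (hφ : φ.WF) :
    ∃ ψ ∈ Cls pol φ, ∃ θ : Val φ, robust (ψ θ) = robust φ.toSTL := by
  induction φ generalizing pol with
  | atom f => exact ⟨fun _ => .atom f, .inr rfl, PUnit.unit, rfl⟩
  | falsum => exact ⟨fun _ => .falsum, rfl, PUnit.unit, rfl⟩
  | not φ ih =>
    obtain ⟨ψ, hψ, θ, hθ⟩ := ih (!pol) hφ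
    refine ⟨fun θ => .not (ψ θ), ⟨ψ, hψ, rfl⟩, θ, ?_⟩
    ext w
    simp only [robust, AForm.toSTL, hθ]
  | and φ₁ φ₂ ih₁ ih₂ =>
    obtain ⟨ψ₁, hψ₁, θ₁, hθ₁⟩ := ih₁ pol hφ.1
    obtain ⟨ψ₂, hψ₂, θ₂, hθ₂⟩ := ih₂ pol hφ.2
    refine ⟨_, ⟨ψ₁, hψ₁, ψ₂, hψ₂, rfl⟩, (θ₁, θ₂), ?_⟩
    ext w
    simp only [robust, AForm.toSTL, hθ₁, hθ₂]
  | or φ₁ φ₂ ih₁ ih₂ =>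
    obtain ⟨ψ₁, hψ₁, θ₁, hθ₁⟩ := ih₁ pol hφ.1
    obtain ⟨ψ₂, hψ₂, θ₂, hθ₂⟩ := ih₂ pol hφ.2
    refine ⟨_, ⟨ψ₁, hψ₁, ψ₂, hψ₂, rfl⟩, (θ₁, θ₂), ?_⟩
    ext w
    simp only [robust, AForm.toSTL, hθ₁, hθ₂]
  | always a b k φ ih =>
    obtain ⟨-, hab, hφ⟩ := hφ
    obtain ⟨ψ, hψ, θ, hθ⟩ := ih pol hφ
    refine ⟨_, ⟨fun _ => ψ, fun _ => hψ, rfl⟩, (.uniform hab k, θ), ?_⟩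
    ext w
    rw [Split.robust_iAnd_always]
    simp only [robust, AForm.toSTL, hθ]
  | event a b k φ ih =>
    obtain ⟨-, hab, hφ⟩ := hφ
    obtain ⟨ψ, hψ, θ, hθ⟩ := ih pol hφ
    refine ⟨_, ⟨fun _ => ψ, fun _ => hψ, rfl⟩, (.uniform hab k, θ), ?_⟩
    ext w
    rw [Split.robust_iOr_event]
    simp only [robust, AForm.toSTL, hθ]
  | untl a b k φ₁ φ₂ ih₁ ih₂ =>
    obtain ⟨ha, hab, hφ₁, hφ₂⟩ := hφ
    obtain ⟨ψ₁, hψ₁, θ₁, hθ₁⟩ := ih₁ pol hφ₁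
    obtain ⟨ψ₂, hψ₂, θ₂, hθ₂⟩ := ih₂ pol hφ₂
    refine ⟨_, ⟨fun _ => ψ₁, fun _ => ψ₂, fun _ _ => ψ₁, fun _ => hψ₁, fun _ => hψ₂,
      fun _ _ => hψ₁, rfl⟩, (.uniform hab k, θ₁, θ₂), ?_⟩
    ext w
    rw [Split.robust_iOr_untl _ _ ha]
    simp only [robust, AForm.toSTL, hθ₁, hθ₂]

/-- Completeness of violation classes (Lemma 2, violation part): if `w ⊭ φ`,
then there is a violation class `ψ ∈ Cls⁻(φ)` with `w ∈ V(ψ)`, i.e. `w ⊭ ψ(θ)`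
for some valuation `θ ∈ Θ`. -/
theorem vio_class_complete {N : ℕ} (φ : AForm N) (hφ : φ.WF) (w : Signal N)
    (hw : Vio w φ.toSTL) :
    ∃ ψ ∈ Cls false φ, ∃ θ : Val φ, Vio w (ψ θ) := by
  obtain ⟨ψ, hψ, θ, hθ⟩ := exists_mem_cls_robust_eq false φ hφ
  exact ⟨ψ, hψ, θ, by rwa [Vio, hθ]⟩

end STLClass
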